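/- (Theorem 1: the line reprojection residual is independent of the choice of endpoints on the world line.) Let R ∈ SO(3) and t ∈ ℝ³ be a camera pose, let A, B ∈ ℝ³ be two points defining a world line, and let P = A + τ·(B − A) be any point on this line (τ ∈ ℝ). Let A_c = Rᵀ·(A − t), B_c = Rᵀ·(B − t), P_c = Rᵀ·(P − t) be the camera-frame coordinates, and let n_c = A_c × B_c. Let fx, fy, cx, cy ∈ ℝ, K the intrinsic matrix with rows (fx, 0, cx), (0, fy, cy), (0, 0, 1), and K_L the line projection matrix with rows (fy, 0, 0), (0, fx, 0), (−fy·cx, −fx·cy, fx·fy). Then (K·P_c) · (K_L·n_c) = 0. Consequently the point-to-line reprojection residual of any observed point lying on the world line vanishes, regardless of whether the two camera observations share common endpoints of the line. -/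
import Mathlib


open Matrix

lemma aux_line_residual (a b : Fin 3 → ℝ) (τ fx fy cx cy : ℝ) :
    (!![fx, 0, cx; 0, fy, cy; 0, 0, 1] : Matrix (Fin 3) (Fin 3) ℝ).mulVec
        (a + τ • (b - a)) ⬝ᵥ
      (!![fy, 0, 0; 0, fx, 0; -(fy * cx), -(fx * cy), fx * fy] :
        Matrix (Fin 3) (Fin 3) ℝ).mulVec (crossProduct a b) = 0 := by
  simp [mulVec, dotProduct, crossProduct, Fin.sum_univ_three, vecHead, vecTail]
  ring

set_option maxHeartbeats 1000000 in
/-- Theorem 1: the line reprojection residual is independent of the choice of endpoints on the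
world line. For a camera pose `(R, t)` with `R ∈ SO(3)`, a world line through `A` and `B`,
and any point `P = A + τ • (B - A)` on this line, the pixel projection of the camera-frame
point `P_c = Rᵀ (P - t)` lies on the projected line `K_L ⬝ n_c` where
`n_c = (Rᵀ (A - t)) ×₃ (Rᵀ (B - t))`, i.e. the point-to-line reprojection residual vanishes. -/
theorem line_reprojection_residual_vanishes
    (R : Matrix (Fin 3) (Fin 3) ℝ) (hR : Rᵀ * R = 1) (hdet : R.det = 1)
    (t A B : Fin 3 → ℝ) (τ : ℝ) (fx fy cx cy : ℝ) :
    (!![fx, 0, cx; 0, fy, cy; 0, 0, 1] : Matrix (Fin 3) (Fin 3) ℝ).mulVec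
        (Rᵀ.mulVec ((A + τ • (B - A)) - t)) ⬝ᵥ
      (!![fy, 0, 0; 0, fx, 0; -(fy * cx), -(fx * cy), fx * fy] :
        Matrix (Fin 3) (Fin 3) ℝ).mulVec
          (crossProduct (Rᵀ.mulVec (A - t)) (Rᵀ.mulVec (B - t))) = 0 := by
  have h : (A + τ • (B - A)) - t = (A - t) + τ • ((B - t) - (A - t)) := by
    ext i; simp [smul_sub]; ring
  have hP : Rᵀ *ᵥ (A + τ • (B - A) - t) =
      (Rᵀ *ᵥ (A - t)) + τ • ((Rᵀ *ᵥ (B - t)) - (Rᵀ *ᵥ (A - t))) := by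
    simp [h, mulVec_add, mulVec_smul, mulVec_sub]
  rw [hP]
  exact aux_line_residual (Rᵀ *ᵥ (A - t)) (Rᵀ *ᵥ (B - t)) τ fx fy cx cy
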